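/- arXiv:1303.5308 — 2 statements merged into one kernel-verified Lean document; each statement's English description precedes it below -/
import Mathlib

section
/- Let d be a positive integer and let (T, (a_t,b_t,w_t)_{t∈T}) be a nonempty labeled long-edge family with a distribution Δ. Suppose there exists v ∈ ℕ such that no edge covers v (i.e., no t ∈ T satisfies a_t < v < b_t), while some edge lies entirely to the left of v (b_t ≤ v) and some edge lies entirely to the right of v (a_{t'} ≥ v); equivalently, the family is not an offset template. Then Q_*^d(T,Δ) := ∑_P (−1)^{|P|−1}·(|P|−1)! · ∏_{E ∈ P} N_*^d(E) = 0, where the sum is over all partitions P of T into nonempty blocks and |P| is the number of blocks. -/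
open scoped Classical

/-- `w_i(E)`: the total weight of the edges in `E` lying over the interval `[i, i+1]`. -/
def wOf {T : Type} (a b w : T → ℕ) (E : Finset T) (i : ℕ) : ℕ :=
  ∑ t ∈ E.filter (fun t => a t ≤ i ∧ i < b t), w t

/-- `m_i(E)`: the number of edges in `E` whose distribution value is `i`. -/
def mOf {T : Type} (Δ : T → ℕ) (E : Finset T) (i : ℕ) : ℕ :=
  (E.filter (fun t => Δ t = i)).card

/-- `P` is a partition of the finite type `T` into nonempty blocks. -/
def IsPartitionOfUniv {T : Type} (P : Finset (Finset T)) : Prop :=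
  (∀ E ∈ P, E.Nonempty) ∧ ∀ x : T, ∃! E, E ∈ P ∧ x ∈ E

/-- A subset `E` of the edges is allowable for `d`. -/
def AllowableE {T : Type} (a b w : T → ℕ) (d : ℕ) (E : Finset T) : Prop :=
  (∀ t ∈ E, b t ≤ d + 1) ∧ (∀ t ∈ E, b t = d + 1 → w t = 1) ∧
    ∀ i : ℕ, wOf a b w E i ≤ i

/-- `N_*^d(E) = ∏_{i∈ℕ} (i − w_i(E) + m_i(E))_{m_i(E)}` if `E` is allowable for `d`,
and `0` otherwise. -/
noncomputable def NstarD {T : Type} (a b w Δ : T → ℕ) (d : ℕ) (E : Finset T) : ℤ :=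
  if AllowableE a b w d E then
    ∏ᶠ i : ℕ, (descPochhammer ℤ (mOf Δ E i)).eval
      ((i : ℤ) - (wOf a b w E i : ℤ) + (mOf Δ E i : ℤ))
  else 0


/-!
`Q_*^d(T, Δ)` is the linear coefficient of the polynomial
`F_T(x) = ∑_P (∏_{E ∈ P} N_*^d(E)) (x)_{|P|}`, because `(x)_{m+1}` has linear coefficient
`(-1)^m m!`. At `x = n ∈ ℕ` the polynomial counts colourings:
`F_T(n) = ∑_{c : T → [n]} ∏_j N_*^d(c⁻¹ j)`, since the colourings whose colour classes form
`P` are exactly the injections `P ↪ [n]`.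

An uncovered vertex `v` splits the edges into those left and right of `v`, and at every
site `i` only edges of one side contribute to `w_i` and `m_i`. Hence
`N_*^d(E) = N_*^d(E_left) N_*^d(E_right)`, the colouring sums factor, and so
`F_T = F_left F_right`. Both factors vanish at `0` because both sides are nonempty, so `F_T`
has no linear term.
-/

open Finset Polynomial

theorem descPochhammer_coeff_zero_of_ne_zero {R : Type*} [Ring R] {m : ℕ} (hm : m ≠ 0) :
    (descPochhammer R m).coeff 0 = 0 := by
  rw [coeff_zero_eq_eval_zero, descPochhammer_ne_zero_eval_zero R hm]

theorem descPochhammer_succ_coeff_one {R : Type*} [CommRing R] (m : ℕ) :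
    (descPochhammer R (m + 1)).coeff 1 = (-1) ^ m * m.factorial := by
  induction m with
  | zero => simp
  | succ m ih =>
    rw [descPochhammer_succ_right, mul_sub, coeff_sub, coeff_mul_X, ← C_eq_natCast, coeff_mul_C,
      descPochhammer_coeff_zero_of_ne_zero m.succ_ne_zero, ih]
    push_cast [Nat.factorial_succ]
    ring

section Colorings

variable {α : Type} [Fintype α] {n : ℕ}

def colorClass (c : α → Fin n) (j : Fin n) : Finset α := {x | c x = j}

noncomputable def fiberPartition (c : α → Fin n) : Finset (Finset α) :=
  (univ.image c).image (colorClass c)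

theorem mem_colorClass {c : α → Fin n} {x : α} {j : Fin n} : x ∈ colorClass c j ↔ c x = j := by
  simp [colorClass]

theorem colorClass_mem_fiberPartition (c : α → Fin n) (x : α) :
    colorClass c (c x) ∈ fiberPartition c :=
  mem_image_of_mem _ (mem_image_of_mem _ (mem_univ x))

theorem isPartitionOfUniv_fiberPartition (c : α → Fin n) :
    IsPartitionOfUniv (fiberPartition c) := by
  refine ⟨?_, fun x => ⟨colorClass c (c x),
    ⟨colorClass_mem_fiberPartition c x, mem_colorClass.2 rfl⟩, ?_⟩⟩
  · simp only [fiberPartition, mem_image]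
    rintro _ ⟨_, ⟨x, -, rfl⟩, rfl⟩
    exact ⟨x, mem_colorClass.2 rfl⟩
  · rintro E ⟨hE, hx⟩
    simp only [fiberPartition, mem_image] at hE
    obtain ⟨_, ⟨y, -, rfl⟩, rfl⟩ := hE
    rw [mem_colorClass.1 hx]

theorem prod_colorClass_eq_prod_fiberPartition {M : Type*} [CommMonoid M] {f : Finset α → M}
    (hf : f ∅ = 1) (c : α → Fin n) :
    ∏ j, f (colorClass c j) = ∏ E ∈ fiberPartition c, f E := by
  rw [fiberPartition, prod_image]
  · refine (prod_subset (subset_univ _) fun j _ hj => ?_).symm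
    rw [show colorClass c j = ∅ from
      filter_false_of_mem fun x _ hx => hj (hx ▸ mem_image_of_mem c (mem_univ x)), hf]
  · simp only [coe_image, coe_univ, Set.image_univ]
    rintro _ ⟨x, rfl⟩ _ ⟨y, rfl⟩ h
    exact mem_colorClass.1 (h ▸ mem_colorClass.2 rfl : x ∈ colorClass c (c y))

end Colorings

namespace IsPartitionOfUniv

variable {α : Type} {P : Finset (Finset α)} (hP : IsPartitionOfUniv P)

noncomputable def block (x : α) : P := ⟨_, (hP.2 x).exists.choose_spec.1⟩

theorem mem_block (x : α) : x ∈ (hP.block x : Finset α) := (hP.2 x).exists.choose_spec.2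

theorem block_eq_of_mem {E : Finset α} (hE : E ∈ P) {x : α} (hx : x ∈ E) :
    hP.block x = ⟨E, hE⟩ :=
  Subtype.ext ((hP.2 x).unique ⟨(hP.block x).2, hP.mem_block x⟩ ⟨hE, hx⟩)

noncomputable def rep (E : P) : α := (hP.1 E E.2).choose

theorem block_rep (E : P) : hP.block (hP.rep E) = E :=
  hP.block_eq_of_mem E.2 (hP.1 E E.2).choose_spec

theorem card_ne_zero [Nonempty α] (hP : IsPartitionOfUniv P) : #P ≠ 0 :=
  card_ne_zero_of_mem (hP.block (Classical.arbitrary α)).2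

section Colorings

variable [Fintype α] {n : ℕ}

theorem block_eq_colorClass {c : α → Fin n} (hc : fiberPartition c = P) (x : α) :
    (hP.block x : Finset α) = colorClass c (c x) :=
  congrArg Subtype.val
    (hP.block_eq_of_mem (hc ▸ colorClass_mem_fiberPartition c x) (mem_colorClass.2 rfl))

theorem apply_eq_iff_block_eq {c : α → Fin n} (hc : fiberPartition c = P) {x y : α} :
    c x = c y ↔ hP.block x = hP.block y := by
  rw [Subtype.ext_iff, hP.block_eq_colorClass hc, hP.block_eq_colorClass hc]
  refine ⟨fun h => by rw [h], fun h => ?_⟩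
  exact mem_colorClass.1 (h ▸ mem_colorClass.2 rfl : x ∈ colorClass c (c y))

theorem fiberPartition_comp_block (φ : P ↪ Fin n) :
    fiberPartition (fun x => φ (hP.block x)) = P := by
  have hclass : ∀ x, colorClass (fun x => φ (hP.block x)) (φ (hP.block x)) = hP.block x := by
    intro x
    ext y
    rw [mem_colorClass, φ.injective.eq_iff]
    exact ⟨fun h => h ▸ hP.mem_block y, fun hy => hP.block_eq_of_mem (hP.block x).2 hy⟩
  ext E
  simp only [fiberPartition, image_image, Function.comp_def, hclass, mem_image, mem_univ,
    true_and]
  refine ⟨?_, fun hE => ?_⟩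
  · rintro ⟨x, rfl⟩
    exact (hP.block x).2
  · obtain ⟨x, hx⟩ := hP.1 E hE
    exact ⟨x, by rw [hP.block_eq_of_mem hE hx]⟩

noncomputable def fiberPartitionEquiv (n : ℕ) :
    {c : α → Fin n // fiberPartition c = P} ≃ (P ↪ Fin n) where
  toFun c := ⟨fun E => c.1 (hP.rep E), fun E E' h => by
    simpa only [hP.block_rep] using (hP.apply_eq_iff_block_eq c.2).1 h⟩
  invFun φ := ⟨fun x => φ (hP.block x), hP.fiberPartition_comp_block φ⟩
  left_inv c := Subtype.ext (funext fun x => (hP.apply_eq_iff_block_eq c.2).2 (hP.block_rep _))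
  right_inv φ := by
    ext E
    simp [hP.block_rep]

theorem card_filter_fiberPartition_eq [DecidableEq α] (hP : IsPartitionOfUniv P) (n : ℕ) :
    #{c : α → Fin n | fiberPartition c = P} = n.descFactorial #P := by
  rw [← Fintype.card_subtype, Fintype.card_congr (hP.fiberPartitionEquiv n),
    Fintype.card_embedding_eq, Fintype.card_fin, Fintype.card_coe]

end Colorings

end IsPartitionOfUniv

section PartitionPolynomial

variable {α : Type} [Fintype α] {R : Type*} [CommRing R]

-- With `f E` read as the mixed moment of random variables indexed by `E`, this is their
-- joint cumulant.
noncomputable def jointCumulant (f : Finset α → R) : R :=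
  ∑ P : Finset (Finset α), if IsPartitionOfUniv P then
    (-1 : R) ^ (#P - 1) * ((#P - 1).factorial : R) * ∏ E ∈ P, f E else 0

def colorSum [DecidableEq α] (f : Finset α → R) (n : ℕ) : R :=
  ∑ c : α → Fin n, ∏ j, f (colorClass c j)

noncomputable def partitionPoly (f : Finset α → R) : R[X] :=
  ∑ P : Finset (Finset α),
    if IsPartitionOfUniv P then (∏ E ∈ P, f E) • descPochhammer R #P else 0

theorem eval_partitionPoly [DecidableEq α] {f : Finset α → R} (hf : f ∅ = 1) (n : ℕ) :
    (partitionPoly f).eval (n : R) = colorSum f n := by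
  simp_rw [colorSum, prod_colorClass_eq_prod_fiberPartition hf]
  rw [← sum_fiberwise univ fiberPartition, partitionPoly, eval_finsetSum]
  refine sum_congr rfl fun P _ => ?_
  rw [sum_congr rfl fun c hc => by rw [(mem_filter.1 hc).2], sum_const]
  split_ifs with hP
  · rw [eval_smul, descPochhammer_eval_eq_descFactorial, hP.card_filter_fiberPartition_eq,
      nsmul_eq_mul, smul_eq_mul, mul_comm]
  · have hno : ∀ c : α → Fin n, fiberPartition c ≠ P := fun c hc =>
      hP (hc ▸ isPartitionOfUniv_fiberPartition c)
    rw [eval_zero, filter_false_of_mem fun c _ => hno c, card_empty, zero_smul]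

theorem coeff_zero_partitionPoly [Nonempty α] (f : Finset α → R) :
    (partitionPoly f).coeff 0 = 0 := by
  rw [partitionPoly, finsetSum_coeff]
  refine sum_eq_zero fun P _ => ?_
  split_ifs with hP
  · rw [coeff_smul, descPochhammer_coeff_zero_of_ne_zero hP.card_ne_zero, smul_zero]
  · exact coeff_zero 0

theorem coeff_one_partitionPoly [Nonempty α] (f : Finset α → R) :
    (partitionPoly f).coeff 1 = jointCumulant f := by
  rw [partitionPoly, finsetSum_coeff]
  refine sum_congr rfl fun P _ => ?_
  split_ifs with hP
  · obtain ⟨m, hm⟩ := Nat.exists_eq_succ_of_ne_zero hP.card_ne_zero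
    rw [coeff_smul, smul_eq_mul, hm, descPochhammer_succ_coeff_one, Nat.succ_sub_one]
    ring
  · exact coeff_zero 1

theorem subtype_colorClass {n : ℕ} (p : α → Prop) [DecidablePred p] (c : α → Fin n)
    (j : Fin n) : (colorClass c j).subtype p = colorClass (fun x : Subtype p => c x) j := by
  ext
  simp [colorClass]

theorem colorSum_eq_mul_of_split [DecidableEq α] {f : Finset α → R} (p : α → Prop)
    [DecidablePred p] (hf : ∀ E, f E = f (E.filter p) * f (E.filter (¬ p ·))) (n : ℕ) :
    colorSum f n =
      colorSum (fun S : Finset (Subtype p) => f (S.map (.subtype _))) n *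
        colorSum (fun S : Finset {x // ¬ p x} => f (S.map (.subtype _))) n := by
  rw [colorSum, colorSum, colorSum, sum_mul_sum, ← Fintype.sum_prod_type']
  refine Fintype.sum_equiv (Equiv.piEquivPiSubtypeProd p fun _ => Fin n) _ _ fun c => ?_
  simp only [Equiv.piEquivPiSubtypeProd_apply, ← prod_mul_distrib, ← subtype_colorClass,
    subtype_map]
  exact prod_congr rfl fun j _ => hf _

theorem partitionPoly_eq_mul_of_split [IsDomain R] [CharZero R] {f : Finset α → R}
    (hf₀ : f ∅ = 1) (p : α → Prop) [DecidablePred p]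
    (hf : ∀ E, f E = f (E.filter p) * f (E.filter (¬ p ·))) :
    partitionPoly f =
      partitionPoly (fun S : Finset (Subtype p) => f (S.map (.subtype _))) *
        partitionPoly (fun S : Finset {x // ¬ p x} => f (S.map (.subtype _))) := by
  classical
  refine eq_of_infinite_eval_eq _ _
    ((Set.infinite_range_of_injective Nat.cast_injective).mono ?_)
  rintro _ ⟨n, rfl⟩
  simp only [Set.mem_ofPred_eq, eval_mul, eval_partitionPoly hf₀,
    eval_partitionPoly (f := fun S => f (S.map _)) (by simpa using hf₀)]
  exact colorSum_eq_mul_of_split p hf n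

theorem jointCumulant_eq_zero_of_mul_split [IsDomain R] [CharZero R] {f : Finset α → R}
    (hf₀ : f ∅ = 1) {p : α → Prop} [DecidablePred p] (hp : ∃ x, p x) (hnp : ∃ x, ¬ p x)
    (hf : ∀ E, f E = f (E.filter p) * f (E.filter (¬ p ·))) :
    jointCumulant f = 0 := by
  obtain ⟨x, hx⟩ := hp
  obtain ⟨y, hy⟩ := hnp
  have : Nonempty α := ⟨x⟩
  have : Nonempty (Subtype p) := ⟨⟨x, hx⟩⟩
  have : Nonempty {x // ¬ p x} := ⟨⟨y, hy⟩⟩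
  rw [← coeff_one_partitionPoly, partitionPoly_eq_mul_of_split hf₀ p hf, coeff_mul,
    Nat.antidiagonal_succ]
  simp [coeff_zero_partitionPoly]

end PartitionPolynomial

section Nstar

variable {T : Type} {a b w Δ : T → ℕ}

noncomputable def NstarFactor (a b w Δ : T → ℕ) (E : Finset T) (i : ℕ) : ℤ :=
  (descPochhammer ℤ (mOf Δ E i)).eval ((i : ℤ) - (wOf a b w E i : ℤ) + (mOf Δ E i : ℤ))

theorem NstarD_of_allowableE {d : ℕ} {E : Finset T} (h : AllowableE a b w d E) :
    NstarD a b w Δ d E = ∏ᶠ i, NstarFactor a b w Δ E i :=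
  if_pos h

theorem NstarD_of_not_allowableE {d : ℕ} {E : Finset T} (h : ¬ AllowableE a b w d E) :
    NstarD a b w Δ d E = 0 :=
  if_neg h

theorem NstarFactor_of_mOf_eq_zero {E : Finset T} {i : ℕ} (h : mOf Δ E i = 0) :
    NstarFactor a b w Δ E i = 1 := by
  simp [NstarFactor, h]

theorem mulSupport_NstarFactor_subset (E : Finset T) :
    Function.mulSupport (NstarFactor a b w Δ E) ⊆ E.image Δ := by
  intro i hi
  by_contra hiΔ
  refine hi (NstarFactor_of_mOf_eq_zero (card_eq_zero.2 (filter_false_of_mem fun t ht hti => ?_)))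
  exact hiΔ (mem_coe.2 (hti ▸ mem_image_of_mem Δ ht))

theorem NstarD_empty (d : ℕ) : NstarD a b w Δ d ∅ = 1 := by
  rw [NstarD_of_allowableE ⟨by simp, by simp, by simp [wOf]⟩]
  exact finprod_eq_one_of_forall_eq_one fun i => NstarFactor_of_mOf_eq_zero (by simp [mOf])

theorem wOf_filter_of_iff {q : T → Prop} [DecidablePred q] {r : Prop} [Decidable r] {i : ℕ}
    (h : ∀ t, a t ≤ i → i < b t → (q t ↔ r)) (E : Finset T) :
    wOf a b w (E.filter q) i = if r then wOf a b w E i else 0 := by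
  rw [wOf, wOf, filter_filter]
  split_ifs with hr
  · exact sum_congr (filter_congr fun t _ => by grind) fun _ _ => rfl
  · exact sum_eq_zero fun t ht => by grind

theorem mOf_filter_of_iff {q : T → Prop} [DecidablePred q] {r : Prop} [Decidable r] {i : ℕ}
    (h : ∀ t, Δ t = i → (q t ↔ r)) (E : Finset T) :
    mOf Δ (E.filter q) i = if r then mOf Δ E i else 0 := by
  rw [mOf, mOf, filter_filter]
  split_ifs with hr
  · exact congrArg card (filter_congr fun t _ => by grind)
  · exact card_eq_zero.2 (filter_false_of_mem fun t _ => by grind)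

variable {p : T → Prop} [DecidablePred p] {s : ℕ → Prop}

theorem NstarFactor_eq_mul_filter (hΔ : ∀ t, a t ≤ Δ t ∧ Δ t < b t)
    (hsep : ∀ t i, a t ≤ i → i < b t → (p t ↔ s i)) (E : Finset T) (i : ℕ) :
    NstarFactor a b w Δ E i =
      NstarFactor a b w Δ (E.filter p) i * NstarFactor a b w Δ (E.filter (¬ p ·)) i := by
  classical
  have hsep' : ∀ t, a t ≤ i → i < b t → (¬ p t ↔ ¬ s i) :=
    fun t h₁ h₂ => not_congr (hsep t i h₁ h₂)
  have hΔsep : ∀ {q : T → Prop} {r : Prop}, (∀ t, a t ≤ i → i < b t → (q t ↔ r)) →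
      ∀ t, Δ t = i → (q t ↔ r) := fun h t ht => h t (ht ▸ (hΔ t).1) (ht ▸ (hΔ t).2)
  simp only [NstarFactor, wOf_filter_of_iff (hsep · i), wOf_filter_of_iff hsep',
    mOf_filter_of_iff (hΔsep (hsep · i)), mOf_filter_of_iff (hΔsep hsep')]
  by_cases hs : s i <;> simp [hs]

theorem wOf_eq_max_filter (hsep : ∀ t i, a t ≤ i → i < b t → (p t ↔ s i)) (E : Finset T)
    (i : ℕ) :
    wOf a b w E i = max (wOf a b w (E.filter p) i) (wOf a b w (E.filter (¬ p ·)) i) := by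
  classical
  rw [wOf_filter_of_iff (hsep · i), wOf_filter_of_iff fun t h₁ h₂ => not_congr (hsep t i h₁ h₂)]
  by_cases hs : s i <;> simp [hs]

theorem allowableE_iff_filter (hsep : ∀ t i, a t ≤ i → i < b t → (p t ↔ s i)) (d : ℕ)
    (E : Finset T) :
    AllowableE a b w d E ↔
      AllowableE a b w d (E.filter p) ∧ AllowableE a b w d (E.filter (¬ p ·)) := by
  simp only [AllowableE, wOf_eq_max_filter hsep E, max_le_iff, mem_filter]
  grind

theorem NstarD_eq_mul_filter (hΔ : ∀ t, a t ≤ Δ t ∧ Δ t < b t)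
    (hsep : ∀ t i, a t ≤ i → i < b t → (p t ↔ s i)) (d : ℕ) (E : Finset T) :
    NstarD a b w Δ d E =
      NstarD a b w Δ d (E.filter p) * NstarD a b w Δ d (E.filter (¬ p ·)) := by
  by_cases hE : AllowableE a b w d E
  · obtain ⟨hp, hnp⟩ := (allowableE_iff_filter hsep d E).1 hE
    rw [NstarD_of_allowableE hE, NstarD_of_allowableE hp, NstarD_of_allowableE hnp,
      ← finprod_mul_distrib ((finite_toSet _).subset (mulSupport_NstarFactor_subset _))
        ((finite_toSet _).subset (mulSupport_NstarFactor_subset _))]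
    exact finprod_congr (NstarFactor_eq_mul_filter hΔ hsep E)
  · rw [NstarD_of_not_allowableE hE]
    rcases not_and_or.1 (mt (allowableE_iff_filter hsep d E).2 hE) with h | h
    · rw [NstarD_of_not_allowableE h, zero_mul]
    · rw [NstarD_of_not_allowableE h, mul_zero]

end Nstar

theorem Qstar_vanishes_of_not_offset_template_general (d : ℕ)
    (T : Type) [Fintype T]
    (a b w Δ : T → ℕ)
    (hΔ : ∀ t, a t ≤ Δ t ∧ Δ t < b t)
    (hsplit : ∃ v : ℕ, (∀ t, ¬ (a t < v ∧ v < b t)) ∧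
      (∃ t, b t ≤ v) ∧ (∃ t', v ≤ a t')) :
    (∑ P : Finset (Finset T),
      if IsPartitionOfUniv P then
        (-1 : ℤ) ^ (P.card - 1) * (Nat.factorial (P.card - 1) : ℤ) *
          ∏ E ∈ P, NstarD a b w Δ d E
      else 0)
    = 0 := by
  obtain ⟨v, hv, ⟨tL, htL⟩, ⟨tR, htR⟩⟩ := hsplit
  have hsep : ∀ t i, a t ≤ i → i < b t → (b t ≤ v ↔ i < v) := fun t i _ _ => by
    have := hv t
    omega
  exact jointCumulant_eq_zero_of_mul_split (NstarD_empty d) ⟨tL, htL⟩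
    ⟨tR, by have := hΔ tR; omega⟩ (NstarD_eq_mul_filter hΔ hsep d)

/-- If the family is not an offset template (some vertex `v` is uncovered, with edges
both entirely to its left and entirely to its right), then `Q_*^d(T,Δ) = 0`. -/
theorem Qstar_vanishes_of_not_offset_template (d : ℕ) (hd : 0 < d)
    (T : Type) [Fintype T] [Nonempty T]
    (a b w Δ : T → ℕ)
    (hab : ∀ t, a t < b t) (hw : ∀ t, 1 ≤ w t)
    (hlong : ∀ t, ¬ (b t = a t + 1 ∧ w t = 1))
    (hΔ : ∀ t, a t ≤ Δ t ∧ Δ t < b t)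
    (hsplit : ∃ v : ℕ, (∀ t, ¬ (a t < v ∧ v < b t)) ∧
      (∃ t, b t ≤ v) ∧ (∃ t', v ≤ a t')) :
    (∑ P : Finset (Finset T),
      if IsPartitionOfUniv P then
        (-1 : ℤ) ^ (P.card - 1) * (Nat.factorial (P.card - 1) : ℤ) *
          ∏ E ∈ P, NstarD a b w Δ d E
      else 0)
    = 0 :=
  Qstar_vanishes_of_not_offset_template_general d T a b w Δ hΔ hsplit
end

section
/- For each positive integer δ, there are only finitely many templates of cogenus δ; that is, the set of finite multisets Γ of edges that are templates and satisfy δ(Γ) = δ is finite. -/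
/-- An edge `(a, b, w)` with `a < b` and `w ≥ 1` which is not short
(i.e. not both `b = a + 1` and `w = 1`). -/
def IsLongEdge (e : ℕ × ℕ × ℕ) : Prop :=
  e.1 < e.2.1 ∧ 1 ≤ e.2.2 ∧ ¬ (e.2.1 = e.1 + 1 ∧ e.2.2 = 1)

/-- A long-edge graph: a finite multiset of edges, none of which is short. -/
def IsLongEdgeGraph (G : Multiset (ℕ × ℕ × ℕ)) : Prop :=
  ∀ e ∈ G, IsLongEdge e

/-- `L(G)`: the minimum left endpoint of an edge of `G`. -/
noncomputable def legL (G : Multiset (ℕ × ℕ × ℕ)) : ℕ :=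
  sInf {n | ∃ e ∈ G, (e : ℕ × ℕ × ℕ).1 = n}

/-- `R(G)`: the maximum right endpoint of an edge of `G`. -/
noncomputable def legR (G : Multiset (ℕ × ℕ × ℕ)) : ℕ :=
  sSup {n | ∃ e ∈ G, (e : ℕ × ℕ × ℕ).2.1 = n}

/-- The vertex `v` is covered by `G`. -/
def Covers (G : Multiset (ℕ × ℕ × ℕ)) (v : ℕ) : Prop :=
  ∃ e ∈ G, (e : ℕ × ℕ × ℕ).1 < v ∧ v < e.2.1

/-- A nonempty long-edge graph all of whose internal vertices are covered. -/
def IsOffsetTemplate (Γ : Multiset (ℕ × ℕ × ℕ)) : Prop :=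
  IsLongEdgeGraph Γ ∧ Γ ≠ 0 ∧ ∀ v : ℕ, legL Γ < v → v < legR Γ → Covers Γ v

/-- A template: an offset template with `L(Γ) = 0`. -/
def IsTemplate (Γ : Multiset (ℕ × ℕ × ℕ)) : Prop :=
  IsOffsetTemplate Γ ∧ legL Γ = 0

/-- The cogenus `δ(G) = ∑_{(a,b,w) ∈ G} ((b−a)·w − 1)`, summed with multiplicity. -/
def cogenus (G : Multiset (ℕ × ℕ × ℕ)) : ℕ :=
  (G.map (fun e => (e.2.1 - e.1) * e.2.2 - 1)).sum

/-!
Every long edge has `(b - a) w ≥ 2`, so it contributes at least `1` to the cogenus: a graph of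
cogenus `δ` has at most `δ` edges, each with `(b - a) w ≤ δ + 1`. In a template the `R - 1`
vertices strictly between `0` and `R` are covered, and an edge `(a, b, w)` covers only
`b - a - 1 ≤ (b - a) w - 1` of them, so `R ≤ δ + 1`. Hence every template of cogenus `δ` is a
submultiset of `δ` copies of the box `[0, δ + 1]³`.
-/

open Finset

section CanonicallyOrderedAdd

variable {M : Type*} [AddCommMonoid M] [PartialOrder M] [CanonicallyOrderedAdd M]

theorem Multiset.sum_le_sum_of_le {s t : Multiset M} (h : s ≤ t) : s.sum ≤ t.sum := by
  obtain ⟨u, rfl⟩ := Multiset.le_iff_exists_add.mp h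
  simp

theorem Multiset.sum_toFinset_le_sum_map {α : Type*} [DecidableEq α] (s : Multiset α)
    (f : α → M) : ∑ a ∈ s.toFinset, f a ≤ (s.map f).sum :=
  Multiset.sum_le_sum_of_le (Multiset.map_le_map (Multiset.dedup_le s))

end CanonicallyOrderedAdd

theorem Multiset.finite_setOf_card_le_of_forall_mem {α : Type*} (F : Finset α) (n : ℕ) :
    {m : Multiset α | Multiset.card m ≤ n ∧ ∀ x ∈ m, x ∈ F}.Finite := by
  classical
  refine (n • F.val).powerset.finite_toSet.subset fun m ⟨hcard, hF⟩ => ?_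
  refine Multiset.mem_powerset.mpr (Multiset.le_iff_count.mpr fun a => ?_)
  by_cases ha : a ∈ m
  · rw [Multiset.count_nsmul, Multiset.count_eq_one_of_mem F.nodup (hF a ha), mul_one]
    exact (Multiset.count_le_card a m).trans hcard
  · simp [Multiset.count_eq_zero_of_notMem ha]

theorem IsLongEdge.two_le_mul {e : ℕ × ℕ × ℕ} (h : IsLongEdge e) :
    2 ≤ (e.2.1 - e.1) * e.2.2 := by
  obtain ⟨hab, hw, hlong⟩ := h
  rcases Nat.lt_or_ge e.2.1 (e.1 + 2) with hb | hb
  · have hw2 : 2 ≤ e.2.2 := by omega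
    have hlen : e.2.1 - e.1 = 1 := by omega
    simpa [hlen] using hw2
  · calc 2 ≤ e.2.1 - e.1 := by omega
      _ ≤ (e.2.1 - e.1) * e.2.2 := Nat.le_mul_of_pos_right _ hw

theorem IsLongEdgeGraph.card_le_cogenus {G : Multiset (ℕ × ℕ × ℕ)} (h : IsLongEdgeGraph G) :
    Multiset.card G ≤ cogenus G := by
  have hterm : ∀ e ∈ G, 1 ≤ (e.2.1 - e.1) * e.2.2 - 1 := fun e he => by
    have := (h e he).two_le_mul
    omega
  simpa [cogenus] using Multiset.sum_map_le_sum_map (fun _ => 1) _ hterm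

theorem le_cogenus_of_mem {G : Multiset (ℕ × ℕ × ℕ)} {e : ℕ × ℕ × ℕ} (he : e ∈ G) :
    (e.2.1 - e.1) * e.2.2 - 1 ≤ cogenus G :=
  Multiset.le_sum_of_mem (Multiset.mem_map_of_mem (fun e => (e.2.1 - e.1) * e.2.2 - 1) he)

theorem le_legR_of_mem {G : Multiset (ℕ × ℕ × ℕ)} {e : ℕ × ℕ × ℕ} (he : e ∈ G) :
    e.2.1 ≤ legR G := by
  classical
  refine le_csSup ?_ ⟨e, he, rfl⟩
  refine (G.toFinset.image fun e => e.2.1).finite_toSet.bddAbove.mono ?_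
  rintro _ ⟨e, he, rfl⟩
  exact mem_image_of_mem _ (Multiset.mem_toFinset.mpr he)

theorem IsOffsetTemplate.legR_le {Γ : Multiset (ℕ × ℕ × ℕ)} (h : IsOffsetTemplate Γ) :
    legR Γ ≤ legL Γ + cogenus Γ + 1 := by
  classical
  obtain ⟨hlong, -, hcov⟩ := h
  have hsub : Ioo (legL Γ) (legR Γ) ⊆ Γ.toFinset.biUnion fun e => Ioo e.1 e.2.1 := by
    intro v hv
    obtain ⟨e, he, hav, hvb⟩ := hcov v (mem_Ioo.mp hv).1 (mem_Ioo.mp hv).2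
    exact mem_biUnion.mpr ⟨e, Multiset.mem_toFinset.mpr he, mem_Ioo.mpr ⟨hav, hvb⟩⟩
  have hcard : legR Γ - legL Γ - 1 ≤ cogenus Γ :=
    calc legR Γ - legL Γ - 1 = #(Ioo (legL Γ) (legR Γ)) := by rw [Nat.card_Ioo]
      _ ≤ #(Γ.toFinset.biUnion fun e => Ioo e.1 e.2.1) := card_le_card hsub
      _ ≤ ∑ e ∈ Γ.toFinset, #(Ioo e.1 e.2.1) := card_biUnion_le
      _ ≤ ∑ e ∈ Γ.toFinset, ((e.2.1 - e.1) * e.2.2 - 1) := by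
        refine sum_le_sum fun e he => ?_
        rw [Nat.card_Ioo]
        have := Nat.le_mul_of_pos_right (e.2.1 - e.1) (hlong e (Multiset.mem_toFinset.mp he)).2.1
        omega
      _ ≤ cogenus Γ := Multiset.sum_toFinset_le_sum_map _ _
  omega

theorem IsTemplate.le_cogenus_add_one {Γ : Multiset (ℕ × ℕ × ℕ)} (h : IsTemplate Γ)
    {e : ℕ × ℕ × ℕ} (he : e ∈ Γ) :
    e.1 ≤ cogenus Γ + 1 ∧ e.2.1 ≤ cogenus Γ + 1 ∧ e.2.2 ≤ cogenus Γ + 1 := by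
  have hmul := (h.1.1 e he).two_le_mul
  have hab := (h.1.1 e he).1
  have hb : e.2.1 ≤ cogenus Γ + 1 := by
    have hR := h.1.legR_le
    have hbR := le_legR_of_mem he
    have hL := h.2
    omega
  have hw : e.2.2 ≤ (e.2.1 - e.1) * e.2.2 := Nat.le_mul_of_pos_left _ (by omega)
  have hδ := le_cogenus_of_mem he
  omega

theorem finitely_many_templates_general (δ : ℕ) :
    {Γ : Multiset (ℕ × ℕ × ℕ) | IsTemplate Γ ∧ cogenus Γ = δ}.Finite := by
  refine (Multiset.finite_setOf_card_le_of_forall_mem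
    (range (δ + 2) ×ˢ range (δ + 2) ×ˢ range (δ + 2)) δ).subset ?_
  rintro Γ ⟨hΓ, rfl⟩
  refine ⟨hΓ.1.1.card_le_cogenus, fun e he => ?_⟩
  obtain ⟨ha, hb, hw⟩ := hΓ.le_cogenus_add_one he
  simp only [mem_product, mem_range]
  omega

/-- There are finitely many templates of a given cogenus. -/
theorem finitely_many_templates (δ : ℕ) (hδ : 0 < δ) :
    {Γ : Multiset (ℕ × ℕ × ℕ) | IsTemplate Γ ∧ cogenus Γ = δ}.Finite :=
  finitely_many_templates_general δ
end
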